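/- Let n = p^s with p prime and s ≥ 1. Then ν(n) = ξ(n) = p^{s−1}, and the ring of constants k[X]^d is a polynomial ring over k in p^{s−1} variables, i.e. k[X]^d is generated as a k-algebra by p^{s−1} elements that are algebraically independent over k. -/

import Mathlib

/-!
Write `n = p^(t+1)` and `m = p^t`. Since `Φ_n(X) = Φ_p(X^m)` has degree `n - m` and nonzero
constant term, a rational polynomial of degree `< n` vanishing at `ε` whose coefficients below `m`
vanish must be zero; hence `∑ αᵢ εⁱ = 0` holds exactly when `α` is `m`-periodic. So `M_n` is the
free monoid on the indicator vectors of the `m` residue classes mod `m`, and these are its minimal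
elements.

For the constants, the discrete Fourier transform `y_j = ∑ᵢ ε^{-ij} xᵢ` is an invertible linear
change of variables with `d y_j = ε^j y_j`, so it conjugates `d` to the diagonal derivation with
`δ(x^α) = H_α(ε) x^α`. The constants of `δ` are spanned by the monomials `x^α` with `α ∈ M_n`,
i.e. they form the polynomial ring on the `m` monomials attached to the residue classes.
-/

open MvPolynomial

/-- The monoid `M_n` of all `α ∈ ℕ^n` with `α_0 + α_1 ε + ⋯ + α_{n-1} ε^{n-1} = 0`. -/
def cycMonoid (n : ℕ) {k : Type*} [Field k] (ε : k) : Set (Fin n → ℕ) :=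
  {α | ∑ i : Fin n, (α i : k) * ε ^ (i : ℕ) = 0}

/-- The set of minimal elements of `M_n`: nonzero elements that are not the sum of two
nonzero elements of `M_n`. -/
def cycMinimal (n : ℕ) {k : Type*} [Field k] (ε : k) : Set (Fin n → ℕ) :=
  {α ∈ cycMonoid n ε | α ≠ 0 ∧
    ¬∃ β γ : Fin n → ℕ, β ∈ cycMonoid n ε ∧ γ ∈ cycMonoid n ε ∧ β ≠ 0 ∧ γ ≠ 0 ∧ α = β + γ}

open Function

section Fibers

variable {ι κ : Type*} [DecidableEq κ] {π : ι → κ}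

theorem exists_single_comp_eq_of_irreducible {S : Set (ι → ℕ)}
    (hS : ∀ α, α ∈ S ↔ α.FactorsThrough π) {α : ι → ℕ} (hαS : α ∈ S) (hα0 : α ≠ 0)
    (hirr : ¬∃ β γ : ι → ℕ, β ∈ S ∧ γ ∈ S ∧ β ≠ 0 ∧ γ ≠ 0 ∧ α = β + γ) :
    ∃ r, Pi.single r 1 ∘ π = α := by
  obtain ⟨i₀, hi₀⟩ := Function.ne_iff.mp hα0
  simp only [Pi.zero_apply] at hi₀
  set E := Pi.single (π i₀) 1 ∘ π
  have hle (i : ι) : E i ≤ α i := by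
    by_cases hi : π i = π i₀
    · have := (hS α).mp hαS hi
      simp only [E, comp_apply, hi, Pi.single_eq_same]
      omega
    · simp [E, hi]
  -- otherwise `α = E + (α - E)` would be a decomposition into nonzero elements of `S`
  refine ⟨π i₀, by_contra fun hne => hirr ⟨E, α - E, (hS E).mpr (FactorsThrough.rfl.comp_left _),
    (hS _).mpr fun i j hij => ?_, ne_of_apply_ne (· i₀) (by simp [E]),
    fun h => hne (funext fun i => ?_), funext fun i => ?_⟩⟩
  · simp only [E, Pi.sub_apply, comp_apply, hij, (hS α).mp hαS hij]
  · have := hle i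
    have := congrFun h i
    simp only [Pi.sub_apply, Pi.zero_apply] at this
    show E i = α i
    omega
  · have := hle i
    simp only [Pi.add_apply, Pi.sub_apply]
    omega

theorem not_exists_single_comp_eq_add {S : Set (ι → ℕ)} (hS : ∀ α, α ∈ S ↔ α.FactorsThrough π)
    (r : κ) : ¬∃ β γ : ι → ℕ, β ∈ S ∧ γ ∈ S ∧ β ≠ 0 ∧ γ ≠ 0 ∧ Pi.single r 1 ∘ π = β + γ := by
  rintro ⟨β, γ, hβ, hγ, hβ0, hγ0, hsum⟩
  obtain ⟨i, hi⟩ := Function.ne_iff.mp hβ0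
  obtain ⟨j, hj⟩ := Function.ne_iff.mp hγ0
  simp only [Pi.zero_apply] at hi hj
  have hfiber {l : ι} (hl : 0 < β l + γ l) : π l = r := by
    by_contra h
    have : (Pi.single r 1 : κ → ℕ) (π l) = β l + γ l := congrFun hsum l
    rw [Pi.single_eq_of_ne h] at this
    omega
  have hij : π i = π j := by rw [hfiber (by omega), hfiber (by omega)]
  have hsi := congrFun hsum i
  simp only [comp_apply, hfiber (by omega : 0 < β i + γ i), Pi.single_eq_same, Pi.add_apply,
    (hS γ).mp hγ hij] at hsi
  omega

theorem setOf_minimal_eq_range_single_comp (hπ : Surjective π) {S : Set (ι → ℕ)}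
    (hS : ∀ α, α ∈ S ↔ α.FactorsThrough π) :
    {α ∈ S | α ≠ 0 ∧ ¬∃ β γ : ι → ℕ, β ∈ S ∧ γ ∈ S ∧ β ≠ 0 ∧ γ ≠ 0 ∧ α = β + γ} =
      Set.range fun r => Pi.single r 1 ∘ π := by
  ext α
  constructor
  · rintro ⟨hαS, hα0, hirr⟩
    exact exists_single_comp_eq_of_irreducible hS hαS hα0 hirr
  · rintro ⟨r, rfl⟩
    obtain ⟨i, rfl⟩ := hπ r
    exact ⟨(hS _).mpr (FactorsThrough.rfl.comp_left _), ne_of_apply_ne (· i) (by simp),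
      not_exists_single_comp_eq_add hS _⟩

theorem ncard_range_single_comp (hπ : Surjective π) :
    (Set.range fun r => (Pi.single r 1 ∘ π : ι → ℕ)).ncard = Nat.card κ := by
  refine Set.ncard_range_of_injective fun r r' h => ?_
  obtain ⟨i, rfl⟩ := hπ r
  by_contra hne
  simpa [Ne.symm hne] using congrFun h i

variable [Finite ι]

noncomputable def fiberIndicator (π : ι → κ) (r : κ) : ι →₀ ℕ :=
  Finsupp.equivFunOnFinite.symm (Pi.single r 1 ∘ π)

theorem linearCombination_fiberIndicator_apply (c : κ →₀ ℕ) (i : ι) :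
    Finsupp.linearCombination ℕ (fiberIndicator π) c i = c (π i) := by
  simp [fiberIndicator, Finsupp.linearCombination_apply, Finsupp.sum_apply, Pi.single_apply,
    eq_comm]

theorem linearIndependent_fiberIndicator (hπ : Surjective π) :
    LinearIndependent ℕ (fiberIndicator π) := fun c c' h =>
  Finsupp.ext fun r => by
    obtain ⟨i, rfl⟩ := hπ r
    simpa only [linearCombination_fiberIndicator_apply] using DFunLike.congr_fun h i

theorem mem_range_linearCombination_fiberIndicator_iff (hπ : Surjective π) (α : ι →₀ ℕ) :
    α ∈ Set.range (Finsupp.linearCombination ℕ (fiberIndicator π)) ↔ (⇑α).FactorsThrough π := by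
  have := Finite.of_surjective π hπ
  constructor
  · rintro ⟨c, rfl⟩ i j hij
    simp only [linearCombination_fiberIndicator_apply, hij]
  · intro hα
    refine ⟨Finsupp.equivFunOnFinite.symm (extend π α 0), Finsupp.ext fun i => ?_⟩
    rw [linearCombination_fiberIndicator_apply, Finsupp.equivFunOnFinite_symm_apply_apply,
      hα.extend_apply]

end Fibers

section MonomialSubalgebra

variable {k σ κ : Type*} [Field k]

theorem aeval_monomial_one_eq_mapDomainAlgHom (E : κ → σ →₀ ℕ) :
    (aeval (fun r => monomial (E r) (1 : k)) : MvPolynomial κ k →ₐ[k] MvPolynomial σ k) =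
      AddMonoidAlgebra.mapDomainAlgHom k k (Finsupp.linearCombination ℕ E).toAddMonoidHom := by
  refine algHom_ext fun r => ?_
  rw [aeval_X, AddMonoidAlgebra.mapDomainAlgHom_apply, X, ← single_eq_monomial,
    ← single_eq_monomial, AddMonoidAlgebra.mapDomain_single]
  simp

theorem aeval_monomial_one_monomial (E : κ → σ →₀ ℕ) (c : κ →₀ ℕ) (a : k) :
    aeval (fun r => monomial (E r) (1 : k)) (monomial c a) =
      monomial (Finsupp.linearCombination ℕ E c) a := by
  rw [aeval_monomial_one_eq_mapDomainAlgHom, AddMonoidAlgebra.mapDomainAlgHom_apply,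
    ← single_eq_monomial, AddMonoidAlgebra.mapDomain_single, single_eq_monomial]
  rfl

theorem mem_adjoin_range_monomial_one_iff (E : κ → σ →₀ ℕ) (F : MvPolynomial σ k) :
    F ∈ Algebra.adjoin k (Set.range fun r => monomial (E r) (1 : k)) ↔
      ↑F.support ⊆ Set.range (Finsupp.linearCombination ℕ E) := by
  classical
  rw [Algebra.adjoin_range_eq_range_aeval, AlgHom.mem_range]
  constructor
  · rintro ⟨P, rfl⟩
    induction P using MvPolynomial.induction_on' with
    | monomial c a =>
      rw [aeval_monomial_one_monomial]
      exact (Finset.coe_subset.mpr support_monomial_subset).trans (by simp)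
    | add P Q hP hQ =>
      rw [map_add]
      exact (Finset.coe_subset.mpr support_add).trans (by simpa using ⟨hP, hQ⟩)
  · intro hF
    choose c hc using fun α : F.support => hF α.2
    refine ⟨∑ α : F.support, monomial (c α) (coeff α F), ?_⟩
    simp only [map_sum, aeval_monomial_one_monomial, hc]
    conv_rhs => rw [F.as_sum]
    exact Finset.sum_coe_sort F.support fun α => monomial α (coeff α F)

theorem algebraicIndependent_monomial_one {E : κ → σ →₀ ℕ} (hE : LinearIndependent ℕ E) :
    AlgebraicIndependent k fun r => monomial (E r) (1 : k) := by
  rw [algebraicIndependent_iff_injective_aeval, aeval_monomial_one_eq_mapDomainAlgHom]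
  exact AddMonoidAlgebra.mapDomain_injective hE

end MonomialSubalgebra

section WeightDerivation

variable {k σ : Type*} [Field k]

noncomputable def weightDerivation (w : σ → k) :
    Derivation k (MvPolynomial σ k) (MvPolynomial σ k) :=
  mkDerivation k fun j => w j • X j

theorem weightDerivation_monomial (w : σ → k) (α : σ →₀ ℕ) (a : k) :
    weightDerivation w (monomial α a) = Finsupp.weight w α • monomial α a := by
  rw [weightDerivation, mkDerivation_monomial, Finsupp.weight_apply, Finsupp.sum, Finsupp.sum,
    Finset.smul_sum, Finset.sum_smul]
  refine Finset.sum_congr rfl fun j hj => ?_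
  have hle : Finsupp.single j 1 ≤ α := by
    simpa [Finsupp.single_le_iff, Nat.one_le_iff_ne_zero] using hj
  rw [X, smul_monomial, smul_eq_mul, monomial_mul, tsub_add_cancel_of_le hle, smul_monomial,
    smul_monomial, nsmul_eq_mul]
  congr 1
  ring

theorem coeff_weightDerivation (w : σ → k) (α : σ →₀ ℕ) (F : MvPolynomial σ k) :
    coeff α (weightDerivation w F) = Finsupp.weight w α * coeff α F := by
  classical
  induction F using MvPolynomial.induction_on' with
  | monomial β a =>
    rw [weightDerivation_monomial, coeff_smul, coeff_monomial]
    split_ifs with h <;> simp [h]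
  | add F G hF hG => rw [map_add, coeff_add, coeff_add, hF, hG, mul_add]

theorem weightDerivation_eq_zero_iff (w : σ → k) (F : MvPolynomial σ k) :
    weightDerivation w F = 0 ↔ (F.support : Set (σ →₀ ℕ)) ⊆ {α | Finsupp.weight w α = 0} := by
  simp only [MvPolynomial.ext_iff, coeff_weightDerivation, coeff_zero, mul_eq_zero,
    Set.subset_def, Finset.mem_coe, mem_support_iff]
  exact forall_congr' fun α => or_iff_not_imp_right

theorem setOf_weightDerivation_eq_zero_eq_adjoin {κ : Type*} {w : σ → k} {E : κ → σ →₀ ℕ}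
    (hE : {α | Finsupp.weight w α = 0} = Set.range (Finsupp.linearCombination ℕ E)) :
    {G | weightDerivation w G = 0} =
      ↑(Algebra.adjoin k (Set.range fun r => monomial (E r) (1 : k))) := by
  ext G
  rw [Set.mem_ofPred_eq, weightDerivation_eq_zero_iff, hE, SetLike.mem_coe,
    mem_adjoin_range_monomial_one_iff]

theorem derivation_aeval_eq_aeval_weightDerivation {A : Type*} [CommRing A] [Algebra k A]
    (d : Derivation k A A) {v : σ → A} {w : σ → k} (hv : ∀ j, d (v j) = w j • v j)
    (G : MvPolynomial σ k) : d (aeval v G) = aeval v (weightDerivation w G) := by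
  induction G using MvPolynomial.induction_on with
  | C a =>
    rw [aeval_C, Derivation.map_algebraMap, ← algebraMap_eq, Derivation.map_algebraMap, map_zero]
  | add G H hG hH => rw [map_add, map_add, hG, hH, map_add, map_add]
  | mul_X G j hG =>
    simp only [map_mul, Derivation.leibniz, aeval_X, hv, hG, weightDerivation, mkDerivation_X,
      smul_eq_mul, map_add, map_smul]

theorem setOf_eq_zero_eq_adjoin_image {A B : Type*} [CommRing A] [CommRing B] [Algebra k A]
    [Algebra k B] (Φ : A ≃ₐ[k] B) {δ : Derivation k A A} {d : Derivation k B B}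
    (h : ∀ G, d (Φ G) = Φ (δ G)) {s : Set A} (hs : {G | δ G = 0} = Algebra.adjoin k s) :
    {F | d F = 0} = Algebra.adjoin k (Φ '' s) := by
  ext F
  obtain ⟨G, rfl⟩ := Φ.surjective F
  have hmap := Algebra.adjoin_image k (Φ : A →ₐ[k] B) s
  rw [AlgEquiv.coe_toAlgHom] at hmap
  rw [hmap, SetLike.mem_coe, Subalgebra.mem_map]
  simp [Φ.injective.eq_iff, ← SetLike.mem_coe, ← hs, h]

end WeightDerivation

section LinearSubst

variable {k σ : Type*} [Field k] [Fintype σ]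

noncomputable def linearSubst (A : Matrix σ σ k) : MvPolynomial σ k →ₐ[k] MvPolynomial σ k :=
  aeval fun j => ∑ i, C (A j i) * X i

theorem linearSubst_comp (A B : Matrix σ σ k) :
    (linearSubst A).comp (linearSubst B) = linearSubst (B * A) := by
  refine algHom_ext fun l => ?_
  simp only [linearSubst, AlgHom.comp_apply, aeval_X, map_sum, map_mul, aeval_C, algebraMap_eq,
    Matrix.mul_apply, Finset.mul_sum, Finset.sum_mul]
  rw [Finset.sum_comm]
  simp only [← mul_assoc, ← C_mul]

theorem linearSubst_one [DecidableEq σ] : linearSubst (1 : Matrix σ σ k) = AlgHom.id k _ :=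
  algHom_ext fun l => by simp [linearSubst, Matrix.one_apply]

noncomputable def linearSubstEquiv [DecidableEq σ] {A B : Matrix σ σ k} (h : A * B = 1) :
    MvPolynomial σ k ≃ₐ[k] MvPolynomial σ k :=
  AlgEquiv.ofAlgHom (linearSubst A) (linearSubst B)
    (by rw [linearSubst_comp, mul_eq_one_comm.mp h, linearSubst_one])
    (by rw [linearSubst_comp, h, linearSubst_one])

end LinearSubst

section DiscreteFourier

variable {k R : Type*} [Field k] [CommRing R] [Fintype R]

theorem dft_mul_inv [DecidableEq R] {ψ : AddChar R k} (hψ : ψ.IsPrimitive)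
    (hR : (Fintype.card R : k) ≠ 0) :
    Matrix.of (fun j i => ψ (-(j * i))) *
      Matrix.of (fun j i => (Fintype.card R : k)⁻¹ * ψ (j * i)) = 1 := by
  ext j l
  have h : ∑ i, ψ (-(j * i)) * ψ (i * l) = ∑ i, ψ (i * (l - j)) :=
    Finset.sum_congr rfl fun i _ => by rw [← AddChar.map_add_eq_mul]; ring_nf
  simp only [Matrix.mul_apply, Matrix.of_apply, mul_left_comm _ (Fintype.card R : k)⁻¹,
    ← Finset.mul_sum, h, AddChar.sum_mulShift _ hψ, sub_eq_zero, Matrix.one_apply,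
    eq_comm (a := l)]
  split_ifs <;> simp [hR]

theorem derivation_sum_addChar_mul_X {d : Derivation k (MvPolynomial R k) (MvPolynomial R k)}
    (hd : ∀ j, d (X j) = X (j + 1)) (ψ : AddChar R k) (j : R) :
    d (∑ i, C (ψ (-(j * i))) * X i) = ψ j • ∑ i, C (ψ (-(j * i))) * X i := by
  have hshift : ∑ i, ψ (-(j * i)) • X (i + 1) =
      ∑ i, ψ (-(j * (i - 1))) • (X i : MvPolynomial R k) :=
    Fintype.sum_equiv (Equiv.addRight 1) _ _ fun i => by simp
  simp only [map_sum, ← smul_eq_C_mul, d.map_smul, hd]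
  rw [hshift, Finset.smul_sum]
  refine Finset.sum_congr rfl fun i _ => ?_
  rw [smul_smul, ← AddChar.map_add_eq_mul]
  ring_nf

theorem ZMod.val_finEquiv (n : ℕ) [NeZero n] (i : Fin n) : (ZMod.finEquiv n i).val = i := by
  obtain ⟨m, rfl⟩ := Nat.exists_eq_succ_of_ne_zero (NeZero.ne n)
  rfl

theorem weight_zmodChar {n : ℕ} [NeZero n] {ζ : k} (hζ : ζ ^ n = 1) (α : ZMod n →₀ ℕ) :
    Finsupp.weight (AddChar.zmodChar n hζ) α =
      ∑ i : Fin n, (α (ZMod.finEquiv n i) : k) * ζ ^ (i : ℕ) := by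
  rw [Finsupp.weight_apply, Finsupp.sum_fintype _ _ (by simp)]
  refine (Fintype.sum_equiv (ZMod.finEquiv n).toEquiv _ _ fun i => ?_).symm
  simp [AddChar.zmodChar_apply, ZMod.val_finEquiv, nsmul_eq_mul]

end DiscreteFourier

section PrimePowerRootsOfUnity

variable {k : Type*} [Field k] [CharZero k]

theorem natTrailingDegree_cyclotomic {n : ℕ} (hn : 0 < n) :
    (Polynomial.cyclotomic n ℚ).natTrailingDegree = 0 := by
  rw [Polynomial.natTrailingDegree_eq_zero]
  right
  rcases Nat.lt_or_ge 1 n with h | h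
  · simp [Polynomial.cyclotomic_coeff_zero ℚ h]
  · obtain rfl : n = 1 := by omega
    simp

theorem natTrailingDegree_add_totient_le {n : ℕ} (hn : 0 < n) {ε : k}
    (hε : IsPrimitiveRoot ε n) {P : Polynomial ℚ} (hP : P ≠ 0) (hPε : Polynomial.aeval ε P = 0) :
    P.natTrailingDegree + n.totient ≤ P.natDegree := by
  obtain ⟨Q, rfl⟩ : Polynomial.cyclotomic n ℚ ∣ P := by
    rw [Polynomial.cyclotomic_eq_minpoly_rat hε hn]
    exact minpoly.dvd ℚ ε hPε
  have hQ : Q ≠ 0 := right_ne_zero_of_mul hP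
  have hΦ := Polynomial.cyclotomic_ne_zero n ℚ
  rw [Polynomial.natTrailingDegree_mul hΦ hQ, Polynomial.natDegree_mul hΦ hQ,
    natTrailingDegree_cyclotomic hn, Polynomial.natDegree_cyclotomic]
  have := Q.natTrailingDegree_le_natDegree
  omega

theorem sum_range_mul_pow_mod {R : Type*} [CommRing R] (c : ℕ → R) (ε : R) (m q : ℕ) :
    ∑ i ∈ Finset.range (m * q), c (i % m) * ε ^ i =
      (∑ a ∈ Finset.range m, c a * ε ^ a) * ∑ b ∈ Finset.range q, (ε ^ m) ^ b := by
  induction q with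
  | zero => simp
  | succ q ih =>
    have hblock : ∑ a ∈ Finset.range m, c ((m * q + a) % m) * ε ^ (m * q + a) =
        (∑ a ∈ Finset.range m, c a * ε ^ a) * (ε ^ m) ^ q := by
      rw [Finset.sum_mul]
      refine Finset.sum_congr rfl fun a ha => ?_
      rw [Nat.mul_add_mod, Nat.mod_eq_of_lt (Finset.mem_range.mp ha), pow_add, pow_mul]
      ring
    rw [Nat.mul_succ, Finset.sum_range_add, ih, hblock, Finset.sum_range_succ, mul_add]

theorem sum_range_mul_pow_mod_eq_zero {R : Type*} [CommRing R] [IsDomain R] {ε : R} {m q : ℕ}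
    (hε : IsPrimitiveRoot ε (m * q)) (hq : 1 < q) (c : ℕ → R) :
    ∑ i ∈ Finset.range (m * q), c (i % m) * ε ^ i = 0 := by
  rcases Nat.eq_zero_or_pos m with rfl | hm
  · simp
  rw [sum_range_mul_pow_mod, (hε.pow (by positivity) rfl).geom_sum_eq_zero hq, mul_zero]

theorem eq_mod_of_sum_range_mul_pow_eq_zero {p t : ℕ} (hp : p.Prime) {ε : k}
    (hε : IsPrimitiveRoot ε (p ^ (t + 1))) {a : ℕ → ℚ}
    (h : ∑ i ∈ Finset.range (p ^ (t + 1)), (a i : k) * ε ^ i = 0) {i : ℕ}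
    (hi : i < p ^ (t + 1)) : a i = a (i % p ^ t) := by
  set P : Polynomial ℚ :=
    ∑ j ∈ Finset.range (p ^ (t + 1)), Polynomial.monomial j (a j - a (j % p ^ t))
  have hcoeff (j : ℕ) : P.coeff j = if j < p ^ (t + 1) then a j - a (j % p ^ t) else 0 := by
    simp only [P, Polynomial.finsetSum_coeff, Polynomial.coeff_monomial, Finset.sum_ite_eq',
      Finset.mem_range]
  have hPε : Polynomial.aeval ε P = 0 := by
    have hmod := sum_range_mul_pow_mod_eq_zero (pow_succ p t ▸ hε) hp.one_lt fun j => (a j : k)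
    rw [← pow_succ] at hmod
    simp [P, map_sum, Polynomial.aeval_monomial, Finset.sum_sub_distrib, h, hmod]
  by_contra hne
  have hP : P ≠ 0 := fun h0 => hne (sub_eq_zero.mp (by simpa [h0, hi] using (hcoeff i).symm))
  have htrail : p ^ t ≤ P.natTrailingDegree :=
    Polynomial.le_natTrailingDegree hP fun j hj => by
      rw [hcoeff, if_pos (hj.trans_le (Nat.pow_le_pow_right hp.pos t.le_succ)),
        Nat.mod_eq_of_lt hj, sub_self]
  have hdeg : P.natDegree ≤ p ^ (t + 1) - 1 :=
    Polynomial.natDegree_le_iff_coeff_eq_zero.mpr fun j hj => by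
      rw [hcoeff, if_neg (by omega)]
  have htot : p ^ t + (p ^ (t + 1)).totient = p ^ (t + 1) := by
    rw [Nat.totient_prime_pow_succ hp, pow_succ, Nat.mul_sub_one,
      Nat.add_sub_cancel' (Nat.le_mul_of_pos_right _ hp.pos)]
  have := natTrailingDegree_add_totient_le (pow_pos hp.pos _) hε hP hPε
  have := pow_pos hp.pos (t + 1)
  omega

variable {p t : ℕ} [hp : Fact p.Prime] {ε : k}

theorem mem_cycMonoid_iff (hε : IsPrimitiveRoot ε (p ^ (t + 1))) (α : Fin (p ^ (t + 1)) → ℕ) :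
    α ∈ cycMonoid (p ^ (t + 1)) ε ↔ α.FactorsThrough (Fin.ofNat (p ^ t) ∘ Fin.val) := by
  let a : ℕ → ℚ := fun i => if h : i < p ^ (t + 1) then α ⟨i, h⟩ else 0
  have ha (i : Fin (p ^ (t + 1))) : a i = α i := by simp [a]
  have hsum : ∑ i : Fin (p ^ (t + 1)), (α i : k) * ε ^ (i : ℕ) =
      ∑ i ∈ Finset.range (p ^ (t + 1)), (a i : k) * ε ^ i := by
    rw [← Fin.sum_univ_eq_sum_range]
    simp [ha]
  simp only [FactorsThrough, comp_apply, Fin.ext_iff, Fin.val_ofNat]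
  rw [cycMonoid, Set.mem_ofPred_eq, hsum]
  constructor
  · intro h i j hij
    have hi := eq_mod_of_sum_range_mul_pow_eq_zero hp.out hε h i.isLt
    have hj := eq_mod_of_sum_range_mul_pow_eq_zero hp.out hε h j.isLt
    rw [ha, hij, ← hj, ha] at hi
    exact_mod_cast hi
  · intro hf
    have hperiodic : ∀ i ∈ Finset.range (p ^ (t + 1)),
        (a i : k) * ε ^ i = (a (i % p ^ t) : k) * ε ^ i := by
      intro i hi
      have hi : i < p ^ (t + 1) := Finset.mem_range.mp hi
      have him : i % p ^ t < p ^ (t + 1) := (Nat.mod_le _ _).trans_lt hi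
      simp only [a, dif_pos hi, dif_pos him]
      rw [@hf ⟨i, hi⟩ ⟨i % p ^ t, him⟩ (Nat.mod_mod _ _).symm]
    rw [Finset.sum_congr rfl hperiodic, pow_succ]
    exact sum_range_mul_pow_mod_eq_zero (pow_succ p t ▸ hε) hp.out.one_lt fun j => (a j : k)

theorem surjective_finOfNat_comp_val :
    Surjective (Fin.ofNat (p ^ t) ∘ Fin.val : Fin (p ^ (t + 1)) → Fin (p ^ t)) := fun r =>
  ⟨Fin.castLE (Nat.pow_le_pow_right hp.out.pos t.le_succ) r, Fin.ext (by simp)⟩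

theorem ncard_cycMinimal (hε : IsPrimitiveRoot ε (p ^ (t + 1))) :
    (cycMinimal (p ^ (t + 1)) ε).ncard = p ^ t := by
  rw [cycMinimal, setOf_minimal_eq_range_single_comp surjective_finOfNat_comp_val
    (mem_cycMonoid_iff hε), ncard_range_single_comp surjective_finOfNat_comp_val, Nat.card_fin]

theorem weight_zmodChar_eq_zero_iff (hε : IsPrimitiveRoot ε (p ^ (t + 1)))
    (α : ZMod (p ^ (t + 1)) →₀ ℕ) :
    Finsupp.weight (AddChar.zmodChar _ hε.pow_eq_one) α = 0 ↔
      (⇑α).FactorsThrough (Fin.ofNat (p ^ t) ∘ ZMod.val) := by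
  rw [weight_zmodChar]
  refine (mem_cycMonoid_iff hε (α ∘ ZMod.finEquiv _)).trans ?_
  simp only [FactorsThrough, comp_apply, (ZMod.finEquiv _).surjective.forall, ZMod.val_finEquiv]

theorem surjective_finOfNat_comp_zmodVal :
    Surjective (Fin.ofNat (p ^ t) ∘ ZMod.val : ZMod (p ^ (t + 1)) → Fin (p ^ t)) := fun r =>
  ⟨r, Fin.ext (by
    simp [ZMod.val_cast_of_lt (r.isLt.trans_le (Nat.pow_le_pow_right hp.out.pos t.le_succ))])⟩

theorem exists_algebraicIndependent_setOf_eq_zero_eq_adjoin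
    (hε : IsPrimitiveRoot ε (p ^ (t + 1)))
    {d : Derivation k (MvPolynomial (ZMod (p ^ (t + 1))) k) (MvPolynomial (ZMod (p ^ (t + 1))) k)}
    (hd : ∀ j, d (X j) = X (j + 1)) :
    ∃ f : Fin (p ^ t) → MvPolynomial (ZMod (p ^ (t + 1))) k,
      AlgebraicIndependent k f ∧ {F | d F = 0} = ↑(Algebra.adjoin k (Set.range f)) := by
  set ψ := AddChar.zmodChar _ hε.pow_eq_one
  have hcard : (Fintype.card (ZMod (p ^ (t + 1))) : k) ≠ 0 := by
    rw [ZMod.card]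
    exact_mod_cast NeZero.ne _
  let Φ := linearSubstEquiv (dft_mul_inv (AddChar.zmodChar_primitive_of_primitive_root _ hε) hcard)
  set π : ZMod (p ^ (t + 1)) → Fin (p ^ t) := Fin.ofNat (p ^ t) ∘ ZMod.val
  have hkernel := setOf_weightDerivation_eq_zero_eq_adjoin (k := k) (w := ψ) (E := fiberIndicator π)
    (Set.ext fun α => (weight_zmodChar_eq_zero_iff hε α).trans
      (mem_range_linearCombination_fiberIndicator_iff surjective_finOfNat_comp_zmodVal α).symm)
  have hconj (G) : d (Φ G) = Φ (weightDerivation ψ G) :=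
    derivation_aeval_eq_aeval_weightDerivation d (derivation_sum_addChar_mul_X hd ψ) G
  refine ⟨Φ ∘ fun r => monomial (fiberIndicator π r) 1, (algebraicIndependent_monomial_one
    (linearIndependent_fiberIndicator surjective_finOfNat_comp_zmodVal)).map' Φ.injective, ?_⟩
  rw [Set.range_comp]
  exact setOf_eq_zero_eq_adjoin_image Φ hconj hkernel

end PrimePowerRootsOfUnity

theorem stmt_14_general {k : Type*} [Field k] [CharZero k] (n : ℕ)
    (p s : ℕ) (hp : p.Prime) (hs : 1 ≤ s) (hnps : n = p ^ s)
    (ε : k) (hε : IsPrimitiveRoot ε n)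
    (d : Derivation k (MvPolynomial (ZMod n) k) (MvPolynomial (ZMod n) k))
    (hd : ∀ j : ZMod n, d (X j) = X (j + 1)) :
    (cycMinimal n ε).ncard = p ^ (s - 1) ∧
    (∑ q ∈ n.primeFactors, n / q) = p ^ (s - 1) ∧
    ∃ f : Fin (p ^ (s - 1)) → MvPolynomial (ZMod n) k,
      AlgebraicIndependent k f ∧
      {F : MvPolynomial (ZMod n) k | d F = 0} = ↑(Algebra.adjoin k (Set.range f)) := by
  subst hnps
  obtain ⟨t, rfl⟩ := Nat.exists_eq_add_of_le' hs
  have : Fact p.Prime := ⟨hp⟩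
  rw [Nat.add_sub_cancel]
  refine ⟨ncard_cycMinimal hε, ?_, exists_algebraicIndependent_setOf_eq_zero_eq_adjoin hε hd⟩
  rw [Nat.primeFactors_prime_pow t.succ_ne_zero hp, Finset.sum_singleton, pow_succ,
    Nat.mul_div_cancel _ hp.pos]

/-- Let `n = p^s` with `p` prime and `s ≥ 1`. Then
`ν(n) = ξ(n) = p^{s-1}`, and the ring of constants `k[X]^d` of the cyclotomic derivation
is a polynomial ring over `k` in `p^{s-1}` variables. -/
theorem stmt_14 {k : Type*} [Field k] [CharZero k] (n : ℕ) (hn : 3 ≤ n)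
    (p s : ℕ) (hp : p.Prime) (hs : 1 ≤ s) (hnps : n = p ^ s)
    (ε : k) (hε : IsPrimitiveRoot ε n)
    (d : Derivation k (MvPolynomial (ZMod n) k) (MvPolynomial (ZMod n) k))
    (hd : ∀ j : ZMod n, d (X j) = X (j + 1)) :
    (cycMinimal n ε).ncard = p ^ (s - 1) ∧
    (∑ q ∈ n.primeFactors, n / q) = p ^ (s - 1) ∧
    ∃ f : Fin (p ^ (s - 1)) → MvPolynomial (ZMod n) k,
      AlgebraicIndependent k f ∧
      {F : MvPolynomial (ZMod n) k | d F = 0} = ↑(Algebra.adjoin k (Set.range f)) :=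
  stmt_14_general n p s hp hs hnps ε hε d hd
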